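/- arXiv:2209.13448 — 3 statements merged into one kernel-verified Lean document; each statement's English description precedes it below -/
import Mathlib

section
/- (Sewing Lemma, dyadic Cauchy estimate) Let E be a Banach space, A : {(s,t) : 0 ≤ s ≤ t ≤ T} → E with A(t,t) = 0, and suppose there are β > 1 and R ≥ 0 with ‖A(s,t) - A(s,u) - A(u,t)‖ ≤ R|t-s|^β for all s ≤ u ≤ t. For n ∈ ℕ let I^n(t) = Σ_{k=0}^{2^n - 1} A(t_k, t_{k+1}) with t_k = (k/2^n)·t. Then ‖I^n(t) - I^{n+1}(t)‖ ≤ R·t^β·2^{n(1-β)}; consequently (I^n(t))_n is a Cauchy sequence in E. -/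
/-!
Inserting the midpoint of each of the `2 ^ n` dyadic intervals of `[0, t]` changes the dyadic sum by
`δA` evaluated at those intervals, each of length `t / 2 ^ n`, so
`‖I^n(t) - I^{n+1}(t)‖ ≤ 2 ^ n R (t / 2 ^ n) ^ β = R t ^ β 2 ^ {n (1 - β)}`.
For `β > 1` this bound is geometric in `n`, hence the dyadic sums form a Cauchy sequence.
-/

/-- The dyadic Riemann-type sums of a germ `A` at level `n` on `[0,t]`. -/
noncomputable def dyadicSum {E : Type*} [NormedAddCommGroup E] [NormedSpace ℝ E]
    (A : ℝ → ℝ → E) (n : ℕ) (t : ℝ) : E :=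
  ∑ k ∈ Finset.range (2 ^ n), A ((k : ℝ) / 2 ^ n * t) (((k : ℝ) + 1) / 2 ^ n * t)

open Finset

theorem sum_range_sub_sum_range_two_mul {α G : Type*} [AddCommGroup G] (A : α → α → G)
    (x y : ℕ → α) (hxy : ∀ k, y (2 * k) = x k) (N : ℕ) :
    ∑ k ∈ range N, A (x k) (x (k + 1)) - ∑ j ∈ range (2 * N), A (y j) (y (j + 1)) =
      ∑ k ∈ range N,
        (A (x k) (x (k + 1)) - A (x k) (y (2 * k + 1)) - A (y (2 * k + 1)) (x (k + 1))) := by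
  induction N with
  | zero => simp
  | succ N ih =>
    have hN : y (2 * N + 1 + 1) = x (N + 1) := hxy (N + 1)
    rw [Nat.mul_succ, sum_range_succ, sum_range_succ, sum_range_succ, sum_range_succ, ← ih,
      hxy, hN]
    abel

noncomputable def dyadicPoint (n : ℕ) (t : ℝ) (k : ℕ) : ℝ := (k : ℝ) / 2 ^ n * t

section DyadicPoint

variable {n : ℕ} {t : ℝ}

theorem dyadicSum_eq_sum_dyadicPoint {E : Type*} [NormedAddCommGroup E] [NormedSpace ℝ E]
    (A : ℝ → ℝ → E) :
    dyadicSum A n t = ∑ k ∈ range (2 ^ n), A (dyadicPoint n t k) (dyadicPoint n t (k + 1)) := by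
  simp [dyadicSum, dyadicPoint]

theorem dyadicPoint_succ_two_mul (k : ℕ) : dyadicPoint (n + 1) t (2 * k) = dyadicPoint n t k := by
  simp only [dyadicPoint, pow_succ, Nat.cast_mul, Nat.cast_ofNat]
  field_simp

theorem dyadicPoint_nonneg (ht : 0 ≤ t) (k : ℕ) : 0 ≤ dyadicPoint n t k := by
  unfold dyadicPoint; positivity

theorem dyadicPoint_mono (ht : 0 ≤ t) : Monotone (dyadicPoint n t) := fun i j hij => by
  unfold dyadicPoint; gcongr

theorem dyadicPoint_two_pow : dyadicPoint n t (2 ^ n) = t := by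
  simp [dyadicPoint]

theorem dyadicPoint_succ_sub (k : ℕ) : dyadicPoint n t (k + 1) - dyadicPoint n t k = t / 2 ^ n := by
  simp only [dyadicPoint, Nat.cast_succ]
  ring

end DyadicPoint

theorem norm_dyadicSum_sub_succ_le {E : Type*} [NormedAddCommGroup E] [NormedSpace ℝ E]
    {T β R t : ℝ} {A : ℝ → ℝ → E}
    (hδ : ∀ s u t : ℝ, 0 ≤ s → s ≤ u → u ≤ t → t ≤ T →
      ‖A s t - A s u - A u t‖ ≤ R * (t - s) ^ β)
    (ht : 0 ≤ t) (htT : t ≤ T) (n : ℕ) :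
    ‖dyadicSum A n t - dyadicSum A (n + 1) t‖ ≤ 2 ^ n * (R * (t / 2 ^ n) ^ β) := by
  have hrefine := sum_range_sub_sum_range_two_mul A (dyadicPoint n t) (dyadicPoint (n + 1) t)
    dyadicPoint_succ_two_mul (2 ^ n)
  rw [← pow_succ', ← dyadicSum_eq_sum_dyadicPoint, ← dyadicSum_eq_sum_dyadicPoint] at hrefine
  rw [hrefine]
  refine (norm_sum_le _ _).trans <|
    (sum_le_card_nsmul _ _ (R * (t / 2 ^ n) ^ β) fun k hk => ?_).trans_eq (by simp [nsmul_eq_mul])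
  rw [← dyadicPoint_succ_sub k]
  refine hδ _ _ _ (dyadicPoint_nonneg ht k) ?_ ?_ ?_
  · rw [← dyadicPoint_succ_two_mul k]; exact dyadicPoint_mono ht (by omega)
  · rw [← dyadicPoint_succ_two_mul (k + 1)]; exact dyadicPoint_mono ht (by omega)
  · calc dyadicPoint n t (k + 1) ≤ dyadicPoint n t (2 ^ n) :=
          dyadicPoint_mono ht (mem_range.mp hk)
      _ = t := dyadicPoint_two_pow
      _ ≤ T := htT

theorem two_pow_mul_div_two_pow_rpow {t : ℝ} (ht : 0 ≤ t) (β : ℝ) (n : ℕ) :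
    (2 : ℝ) ^ n * (t / 2 ^ n) ^ β = t ^ β * 2 ^ ((n : ℝ) * (1 - β)) := by
  have h2n : (0 : ℝ) < 2 ^ n := by positivity
  rw [Real.div_rpow ht h2n.le, Real.rpow_natCast_mul zero_le_two, Real.rpow_sub h2n,
    Real.rpow_one]
  field_simp

theorem sewing_dyadic_cauchy_general
    {E : Type*} [NormedAddCommGroup E] [NormedSpace ℝ E]
    (T : ℝ) (A : ℝ → ℝ → E)
    (β R : ℝ) (hβ : 1 < β)
    (hδ : ∀ s u t : ℝ, 0 ≤ s → s ≤ u → u ≤ t → t ≤ T →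
      ‖A s t - A s u - A u t‖ ≤ R * (t - s) ^ β)
    (t : ℝ) (ht : t ∈ Set.Icc 0 T) :
    (∀ n : ℕ, ‖dyadicSum A n t - dyadicSum A (n+1) t‖ ≤ R * t ^ β * 2 ^ ((n : ℝ) * (1 - β))) ∧
    CauchySeq (fun n => dyadicSum A n t) := by
  obtain ⟨ht0, htT⟩ := ht
  have hbound (n : ℕ) :
      ‖dyadicSum A n t - dyadicSum A (n + 1) t‖ ≤ R * t ^ β * 2 ^ ((n : ℝ) * (1 - β)) := by
    calc _ ≤ 2 ^ n * (R * (t / 2 ^ n) ^ β) := norm_dyadicSum_sub_succ_le hδ ht0 htT n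
      _ = R * (2 ^ n * (t / 2 ^ n) ^ β) := by ring
      _ = R * t ^ β * 2 ^ ((n : ℝ) * (1 - β)) := by
        rw [two_pow_mul_div_two_pow_rpow ht0, mul_assoc]
  refine ⟨hbound, cauchySeq_of_le_geometric ((2 : ℝ) ^ (1 - β)) (R * t ^ β)
    (Real.rpow_lt_one_of_one_lt_of_neg one_lt_two (by linarith)) fun n => ?_⟩
  rw [dist_eq_norm, ← Real.rpow_mul_natCast zero_le_two, mul_comm (1 - β)]
  exact hbound n

theorem sewing_dyadic_cauchy
    {E : Type*} [NormedAddCommGroup E] [NormedSpace ℝ E] [CompleteSpace E]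
    (T : ℝ) (hT : 0 ≤ T) (A : ℝ → ℝ → E)
    (hdiag : ∀ t : ℝ, A t t = 0)
    (β R : ℝ) (hβ : 1 < β) (hR : 0 ≤ R)
    (hδ : ∀ s u t : ℝ, 0 ≤ s → s ≤ u → u ≤ t → t ≤ T →
      ‖A s t - A s u - A u t‖ ≤ R * (t - s) ^ β)
    (t : ℝ) (ht : t ∈ Set.Icc 0 T) :
    (∀ n : ℕ, ‖dyadicSum A n t - dyadicSum A (n+1) t‖ ≤ R * t ^ β * 2 ^ ((n : ℝ) * (1 - β))) ∧
    CauchySeq (fun n => dyadicSum A n t) :=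
  sewing_dyadic_cauchy_general T A β R hβ hδ t ht
end

section
/- (Minty's trick in Hilbert space) Let H be a real Hilbert space and A : H → H a monotone operator (⟨A u - A v, u - v⟩ ≥ 0 for all u,v) that is hemicontinuous (for all u, v, w ∈ H, t ↦ ⟨A(u + t v), w⟩ is continuous on [0,1]). Suppose u_n ⇀ u weakly in H, A u_n ⇀ ξ weakly in H, and ⟨A u_n, u_n⟩ → ⟨ξ, u⟩. Then A u = ξ. -/
/-!
Passing to the limit in `0 ≤ ⟪A uₙ - A v, uₙ - v⟫` only needs the weak limits of `uₙ` and `A uₙ`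
and the limit of the pairing `⟪A uₙ, uₙ⟫`, and gives `0 ≤ ⟪ξ - A v, u - v⟫` for every `v`.
Testing this with `v = u - t w` and dividing by `t > 0` gives `⟪A (u - t w), w⟫ ≤ ⟪ξ, w⟫`;
hemicontinuity lets `t → 0⁺`, so `⟪A u, w⟫ ≤ ⟪ξ, w⟫` for all `w`, and replacing `w` by `-w`
gives `A u = ξ`.
-/

open Filter Topology Set

section InnerProduct

variable {H : Type*} [NormedAddCommGroup H] [InnerProductSpace ℝ H]

theorem eq_of_forall_inner_le {x y : H} (h : ∀ w, inner ℝ x w ≤ inner ℝ y w) : x = y :=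
  ext_inner_right ℝ fun w => le_antisymm (h w) <| by
    simpa only [inner_neg_right, neg_le_neg_iff] using h (-w)

theorem tendsto_inner_sub_sub {ι : Type*} {l : Filter ι} {x y : ι → H} {x₀ y₀ : H}
    (hx : ∀ w, Tendsto (fun i => inner ℝ (x i) w) l (𝓝 (inner ℝ x₀ w)))
    (hy : ∀ w, Tendsto (fun i => inner ℝ (y i) w) l (𝓝 (inner ℝ y₀ w)))
    (hxy : Tendsto (fun i => inner ℝ (x i) (y i)) l (𝓝 (inner ℝ x₀ y₀))) (a b : H) :
    Tendsto (fun i => inner ℝ (x i - a) (y i - b)) l (𝓝 (inner ℝ (x₀ - a) (y₀ - b))) := by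
  have expand : ∀ p q : H, inner ℝ (p - a) (q - b) =
      inner ℝ p q - inner ℝ p b - inner ℝ q a + inner ℝ a b := fun p q => by
    rw [inner_sub_left, inner_sub_right, inner_sub_right, real_inner_comm a q]
    ring
  simp only [expand]
  exact ((hxy.sub (hx b)).sub (hy a)).add tendsto_const_nhds

end InnerProduct

theorem le_of_continuousOn_Icc_of_le_on_Ioc {g : ℝ → ℝ} {a b c : ℝ} (hab : a < b)
    (hg : ContinuousOn g (Icc a b)) (hle : ∀ t ∈ Ioc a b, g t ≤ c) : g a ≤ c := by
  have ha : a ∈ Icc a b := left_mem_Icc.2 hab.le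
  have hmem := ((hg a ha).mono Ioc_subset_Icc_self).mem_closure
    (by rwa [closure_Ioc hab.ne]) (fun t ht => mem_Iic.2 (hle t ht))
  rwa [closure_Iic] at hmem

section Minty

variable {H : Type*} [NormedAddCommGroup H] [InnerProductSpace ℝ H] {A : H → H}

theorem inner_sub_nonneg_of_monotone_of_tendsto {ι : Type*} {l : Filter ι} [l.NeBot]
    (hmono : ∀ u v : H, 0 ≤ inner ℝ (A u - A v) (u - v)) {u ξ : H} {x : ι → H}
    (hx : ∀ w, Tendsto (fun i => inner ℝ (x i) w) l (𝓝 (inner ℝ u w)))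
    (hAx : ∀ w, Tendsto (fun i => inner ℝ (A (x i)) w) l (𝓝 (inner ℝ ξ w)))
    (hpair : Tendsto (fun i => inner ℝ (A (x i)) (x i)) l (𝓝 (inner ℝ ξ u))) (v : H) :
    0 ≤ inner ℝ (ξ - A v) (u - v) :=
  ge_of_tendsto' (tendsto_inner_sub_sub hAx hx hpair (A v) v) fun i => hmono (x i) v

theorem inner_le_of_forall_inner_sub_nonneg {u ξ : H}
    (hhemi : ∀ v w : H, ContinuousOn (fun t : ℝ => inner ℝ (A (u + t • v)) w) (Icc 0 1))
    (hvar : ∀ v, 0 ≤ inner ℝ (ξ - A v) (u - v)) (w : H) :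
    inner ℝ (A u) w ≤ inner ℝ ξ w := by
  have hpos : ∀ t ∈ Ioc (0 : ℝ) 1, inner ℝ (A (u + t • -w)) w ≤ inner ℝ ξ w := by
    intro t ht
    have hstep : u - (u + t • -w) = t • w := by rw [smul_neg, sub_add_cancel_left, neg_neg]
    have h := hvar (u + t • -w)
    rw [hstep, real_inner_smul_right, inner_sub_left] at h
    exact sub_nonneg.1 (nonneg_of_mul_nonneg_right h ht.1)
  simpa using le_of_continuousOn_Icc_of_le_on_Ioc one_pos (hhemi (-w) w) hpos

end Minty

theorem minty_trick_general
    {H : Type*} [NormedAddCommGroup H] [InnerProductSpace ℝ H]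
    (A : H → H)
    (hmono : ∀ u v : H, (0:ℝ) ≤ inner ℝ (A u - A v) (u - v))
    (hhemi : ∀ u v w : H, ContinuousOn (fun t : ℝ => (inner ℝ (A (u + t • v)) w : ℝ)) (Set.Icc 0 1))
    (u ξ : H) (un : ℕ → H)
    (hweak_u : ∀ w : H, Tendsto (fun n => (inner ℝ (un n) w : ℝ)) atTop (𝓝 (inner ℝ u w)))
    (hweak_A : ∀ w : H, Tendsto (fun n => (inner ℝ (A (un n)) w : ℝ)) atTop (𝓝 (inner ℝ ξ w)))
    (hpair : Tendsto (fun n => (inner ℝ (A (un n)) (un n) : ℝ)) atTop (𝓝 (inner ℝ ξ u))) :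
    A u = ξ :=
  eq_of_forall_inner_le <| inner_le_of_forall_inner_sub_nonneg (hhemi u)
    (inner_sub_nonneg_of_monotone_of_tendsto hmono hweak_u hweak_A hpair)

theorem minty_trick
    {H : Type*} [NormedAddCommGroup H] [InnerProductSpace ℝ H] [CompleteSpace H]
    (A : H → H)
    (hmono : ∀ u v : H, (0:ℝ) ≤ inner ℝ (A u - A v) (u - v))
    (hhemi : ∀ u v w : H, ContinuousOn (fun t : ℝ => (inner ℝ (A (u + t • v)) w : ℝ)) (Set.Icc 0 1))
    (u ξ : H) (un : ℕ → H)
    (hweak_u : ∀ w : H, Tendsto (fun n => (inner ℝ (un n) w : ℝ)) atTop (𝓝 (inner ℝ u w)))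
    (hweak_A : ∀ w : H, Tendsto (fun n => (inner ℝ (A (un n)) w : ℝ)) atTop (𝓝 (inner ℝ ξ w)))
    (hpair : Tendsto (fun n => (inner ℝ (A (un n)) (un n) : ℝ)) atTop (𝓝 (inner ℝ ξ u))) :
    A u = ξ :=
  minty_trick_general A hmono hhemi u ξ un hweak_u hweak_A hpair
end

section
/- (Sewing limit exchange, simplified) Let E be a Banach space, 0 < α ≤ 1 < β, and let A, A^n be germs on [0,T] with values in E (A(t,t) = A^n(t,t) = 0) such that sup_n ‖δA^n‖_β ≤ R, ‖δA‖_β ≤ R, and ‖A^n - A‖_α → 0, where ‖B‖_α = sup_{s<t} ‖B(s,t)‖/|t-s|^α and ‖δB‖_β = sup_{s<u<t}‖B(s,t)-B(s,u)-B(u,t)‖/|t-s|^β. Then the sewings satisfy ‖ℐA^n - ℐA‖_{C^α([0,T];E)} → 0. -/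
open Filter Topology

/-!
Put `F = ℐAⁿ - ℐA`. On a subinterval of length `h`, the increment of `F` is the increment of the
germ `Aⁿ - A` up to the two sewing remainders, hence at most `εₙ h^α + 2cR h^β`. Cutting `[s, t]`
into `N` equal pieces and summing gives
`‖F t - F s‖ ≤ (εₙ N + 2cR T^(β-α) N^(1-β)) (t - s)^α`.
Since `β > 1` the second term vanishes as `N → ∞`, so it suffices to let `N = Nₙ` grow slowly
enough that `εₙ Nₙ → 0` as well.
-/

lemma exists_tendsto_atTop_mul_tendsto_zero {ε : ℕ → ℝ} (hε : Tendsto ε atTop (𝓝 0)) :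
    ∃ N : ℕ → ℕ, (∀ n, 0 < N n) ∧ Tendsto N atTop atTop ∧
      Tendsto (fun n => ε n * N n) atTop (𝓝 0) := by
  -- `e > 0` dominates `|ε|` and still tends to `0`; `N = ⌈e^(-1/2)⌉` then gives `εN = O(√e)`.
  set e : ℕ → ℝ := fun n => |ε n| + 1 / ((n : ℝ) + 1)
  have he : Tendsto e atTop (𝓝 0) := by
    simpa [e] using hε.abs.add tendsto_one_div_add_atTop_nhds_zero_nat
  have he_pos (n : ℕ) : 0 < e n := by positivity
  have hsqrt : Tendsto (fun n => √(e n)) atTop (𝓝[>] 0) :=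
    tendsto_nhdsWithin_iff.2
      ⟨by simpa using he.sqrt, Eventually.of_forall fun n => Real.sqrt_pos.2 (he_pos n)⟩
  refine ⟨fun n => ⌈(√(e n))⁻¹⌉₊, fun n => Nat.ceil_pos.2 (by positivity), ?_, ?_⟩
  · rw [← tendsto_natCast_atTop_iff (R := ℝ)]
    exact tendsto_atTop_mono (fun n => Nat.le_ceil _) hsqrt.inv_tendsto_nhdsGT_zero
  · refine squeeze_zero_norm (fun n => ?_) (by simpa using he.sqrt.add he)
    have hN : (⌈(√(e n))⁻¹⌉₊ : ℝ) ≤ (√(e n))⁻¹ + 1 :=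
      (Nat.ceil_lt_add_one (by positivity)).le
    calc ‖ε n * ⌈(√(e n))⁻¹⌉₊‖ = |ε n| * ⌈(√(e n))⁻¹⌉₊ := by simp
      _ ≤ e n * ((√(e n))⁻¹ + 1) := by
          gcongr
          exact le_add_of_nonneg_right (by positivity)
      _ = √(e n) + e n := by rw [mul_add, ← div_eq_mul_inv, Real.div_sqrt, mul_one]

section

variable {E : Type*} [SeminormedAddCommGroup E]

lemma norm_sub_le_mul_of_uniform_partition (F : ℝ → E) {s t C : ℝ} (hst : s ≤ t) {N : ℕ}
    (hN : 0 < N) (hF : ∀ a b, s ≤ a → b ≤ t → b - a = (t - s) / N → ‖F b - F a‖ ≤ C) :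
    ‖F t - F s‖ ≤ N * C := by
  set h := (t - s) / N
  have hh : 0 ≤ h := div_nonneg (sub_nonneg.2 hst) N.cast_nonneg
  have hNh : s + N * h = t := by
    rw [mul_div_cancel₀ _ (Nat.cast_ne_zero.2 hN.ne')]; ring
  calc ‖F t - F s‖ = ‖∑ i ∈ Finset.range N, (F (s + (i + 1 : ℕ) * h) - F (s + i * h))‖ := by
        rw [Finset.sum_range_sub (fun i : ℕ => F (s + i * h)), ← hNh]; simp
    _ ≤ ∑ i ∈ Finset.range N, ‖F (s + (i + 1 : ℕ) * h) - F (s + i * h)‖ := norm_sum_le _ _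
    _ ≤ ∑ _i ∈ Finset.range N, C := by
        refine Finset.sum_le_sum fun i hi =>
          hF _ _ (le_add_of_nonneg_right (by positivity)) ?_ (by push_cast; ring)
        have : ((i + 1 : ℕ) : ℝ) ≤ N := by exact_mod_cast Finset.mem_range.1 hi
        rw [← hNh]; gcongr
    _ = N * C := by simp

variable {T α β C ε : ℝ} {A B : ℝ → ℝ → E} {I J : ℝ → E}

lemma norm_sewing_increment_sub_le {s t : ℝ} (hI : ‖I t - I s - A s t‖ ≤ C * (t - s) ^ β)
    (hJ : ‖J t - J s - B s t‖ ≤ C * (t - s) ^ β) (hAB : ‖B s t - A s t‖ ≤ ε * (t - s) ^ α) :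
    ‖(J t - J s) - (I t - I s)‖ ≤ 2 * C * (t - s) ^ β + ε * (t - s) ^ α := by
  calc ‖(J t - J s) - (I t - I s)‖
        = ‖(J t - J s - B s t) - (I t - I s - A s t) + (B s t - A s t)‖ := by congr 1; abel
    _ ≤ ‖J t - J s - B s t‖ + ‖I t - I s - A s t‖ + ‖B s t - A s t‖ :=
        norm_add_le_of_le (norm_sub_le _ _) le_rfl
    _ ≤ 2 * C * (t - s) ^ β + ε * (t - s) ^ α := by linarith

lemma norm_sewing_sub_le (hα : 0 ≤ α) (hαβ : α ≤ β)
    (hI : ∀ s t, 0 ≤ s → s ≤ t → t ≤ T → ‖I t - I s - A s t‖ ≤ C * (t - s) ^ β)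
    (hJ : ∀ s t, 0 ≤ s → s ≤ t → t ≤ T → ‖J t - J s - B s t‖ ≤ C * (t - s) ^ β)
    (hAB : ∀ s t, 0 ≤ s → s ≤ t → t ≤ T → ‖B s t - A s t‖ ≤ ε * (t - s) ^ α)
    {N : ℕ} (hN : 0 < N) {s t : ℝ} (hs : 0 ≤ s) (hst : s < t) (htT : t ≤ T) :
    ‖(J t - J s) - (I t - I s)‖ ≤ (2 * C * T ^ (β - α) * N ^ (1 - β) + ε * N) * (t - s) ^ α := by
  have hts : 0 < t - s := sub_pos.2 hst
  have hC : 0 ≤ C := nonneg_of_mul_nonneg_left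
    ((norm_nonneg _).trans (hI s t hs hst.le htT)) (Real.rpow_pos_of_pos hts β)
  have hε : 0 ≤ ε := nonneg_of_mul_nonneg_left
    ((norm_nonneg _).trans (hAB s t hs hst.le htT)) (Real.rpow_pos_of_pos hts α)
  set h := (t - s) / N
  have hh : 0 ≤ h := by positivity
  have hpieces := norm_sub_le_mul_of_uniform_partition (fun x => J x - I x) hst.le hN
    (C := 2 * C * h ^ β + ε * h ^ α) fun a b ha hb hab => by
      have hab' : a ≤ b := by linarith
      have := norm_sewing_increment_sub_le (hI a b (hs.trans ha) hab' (hb.trans htT))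
        (hJ a b (hs.trans ha) hab' (hb.trans htT)) (hAB a b (hs.trans ha) hab' (hb.trans htT))
      rw [hab] at this
      simpa only [sub_sub_sub_comm] using this
  have hpow : (t - s) ^ β ≤ T ^ (β - α) * (t - s) ^ α := by
    calc (t - s) ^ β = (t - s) ^ (β - α) * (t - s) ^ α := by rw [← Real.rpow_add hts]; ring_nf
      _ ≤ T ^ (β - α) * (t - s) ^ α := by gcongr; linarith
  have hh_le : h ≤ t - s := div_le_self hts.le (Nat.one_le_cast.2 hN)
  calc ‖(J t - J s) - (I t - I s)‖ ≤ N * (2 * C * h ^ β + ε * h ^ α) := by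
        simpa only [sub_sub_sub_comm] using hpieces
    _ = 2 * C * N ^ (1 - β) * (t - s) ^ β + ε * N * h ^ α := by
        rw [Real.rpow_sub (Nat.cast_pos.2 hN), Real.rpow_one, Real.div_rpow hts.le N.cast_nonneg]
        ring
    _ ≤ 2 * C * N ^ (1 - β) * (T ^ (β - α) * (t - s) ^ α) + ε * N * (t - s) ^ α := by
        gcongr
    _ = (2 * C * T ^ (β - α) * N ^ (1 - β) + ε * N) * (t - s) ^ α := by ring

end

theorem sewing_limit_exchange_general
    {E : Type*} [NormedAddCommGroup E]
    (T : ℝ) (α β : ℝ) (hα₀ : 0 < α) (hα₁ : α ≤ 1) (hβ : 1 < β)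
    (A : ℝ → ℝ → E) (An : ℕ → ℝ → ℝ → E)
    (R : ℝ)
    -- convergence of the germs in the α-norm: ‖Aⁿ - A‖_α → 0
    (ε : ℕ → ℝ) (hε : Tendsto ε atTop (𝓝 0))
    (hconv : ∀ n : ℕ, ∀ s t : ℝ, 0 ≤ s → s ≤ t → t ≤ T →
      ‖An n s t - A s t‖ ≤ ε n * (t - s) ^ α)
    -- the sewings of A and of the Aⁿ, characterized by Gubinelli's Sewing Lemma:
    (IA : ℝ → E) (IAn : ℕ → ℝ → E) (c : ℝ)
    (hIA : ∀ s t : ℝ, 0 ≤ s → s ≤ t → t ≤ T →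
      ‖IA t - IA s - A s t‖ ≤ c * R * (t - s) ^ β)
    (hIAn : ∀ n : ℕ, ∀ s t : ℝ, 0 ≤ s → s ≤ t → t ≤ T →
      ‖IAn n t - IAn n s - An n s t‖ ≤ c * R * (t - s) ^ β) :
    ∃ K : ℕ → ℝ, Tendsto K atTop (𝓝 0) ∧
      ∀ n : ℕ, ∀ s t : ℝ, 0 ≤ s → s ≤ t → t ≤ T →
        ‖(IAn n t - IAn n s) - (IA t - IA s)‖ ≤ K n * (t - s) ^ α := by
  obtain ⟨N, hN_pos, hN, hεN⟩ := exists_tendsto_atTop_mul_tendsto_zero hε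
  refine ⟨fun n => 2 * (c * R) * T ^ (β - α) * (N n : ℝ) ^ (1 - β) + ε n * N n, ?_, ?_⟩
  · have hpow : Tendsto (fun k : ℕ => (k : ℝ) ^ (1 - β)) atTop (𝓝 0) := by
      simpa [Function.comp_def] using
        (tendsto_rpow_neg_atTop (sub_pos.2 hβ)).comp tendsto_natCast_atTop_atTop
    simpa using ((hpow.comp hN).const_mul (2 * (c * R) * T ^ (β - α))).add hεN
  · intro n s t hs hst htT
    rcases hst.eq_or_lt with rfl | hlt
    · simp [Real.zero_rpow hα₀.ne']
    exact norm_sewing_sub_le hα₀.le (hα₁.trans hβ.le) hIA (hIAn n) (hconv n) (hN_pos n) hs hlt htT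

theorem sewing_limit_exchange
    {E : Type*} [NormedAddCommGroup E] [NormedSpace ℝ E] [CompleteSpace E]
    (T : ℝ) (hT : 0 < T) (α β : ℝ) (hα₀ : 0 < α) (hα₁ : α ≤ 1) (hβ : 1 < β)
    (A : ℝ → ℝ → E) (An : ℕ → ℝ → ℝ → E)
    (hAdiag : ∀ t, A t t = 0) (hAndiag : ∀ n t, An n t t = 0)
    (R : ℝ) (hR : 0 ≤ R)
    -- uniform bound on δA and δAⁿ in the β-norm:
    (hδA : ∀ s u t : ℝ, 0 ≤ s → s ≤ u → u ≤ t → t ≤ T →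
      ‖A s t - A s u - A u t‖ ≤ R * (t - s) ^ β)
    (hδAn : ∀ n : ℕ, ∀ s u t : ℝ, 0 ≤ s → s ≤ u → u ≤ t → t ≤ T →
      ‖An n s t - An n s u - An n u t‖ ≤ R * (t - s) ^ β)
    -- convergence of the germs in the α-norm: ‖Aⁿ - A‖_α → 0
    (ε : ℕ → ℝ) (hε : Tendsto ε atTop (𝓝 0))
    (hconv : ∀ n : ℕ, ∀ s t : ℝ, 0 ≤ s → s ≤ t → t ≤ T →
      ‖An n s t - A s t‖ ≤ ε n * (t - s) ^ α)
    -- the sewings of A and of the Aⁿ, characterized by Gubinelli's Sewing Lemma: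
    (IA : ℝ → E) (IAn : ℕ → ℝ → E) (c : ℝ)
    (hIA0 : IA 0 = 0) (hIAn0 : ∀ n, IAn n 0 = 0)
    (hIA : ∀ s t : ℝ, 0 ≤ s → s ≤ t → t ≤ T →
      ‖IA t - IA s - A s t‖ ≤ c * R * (t - s) ^ β)
    (hIAn : ∀ n : ℕ, ∀ s t : ℝ, 0 ≤ s → s ≤ t → t ≤ T →
      ‖IAn n t - IAn n s - An n s t‖ ≤ c * R * (t - s) ^ β) :
    ∃ K : ℕ → ℝ, Tendsto K atTop (𝓝 0) ∧
      ∀ n : ℕ, ∀ s t : ℝ, 0 ≤ s → s ≤ t → t ≤ T →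
        ‖(IAn n t - IAn n s) - (IA t - IA s)‖ ≤ K n * (t - s) ^ α :=
  sewing_limit_exchange_general T α β hα₀ hα₁ hβ A An R ε hε hconv IA IAn c hIA hIAn
end
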